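/- (Audenaert inequality specialization) For density matrices $\rho, \hat{\rho} \in \mathbb{C}^{d \times d}$, $1 - \mathrm{Tr}(\sqrt{\hat{\rho}} \sqrt{\rho}) \le \tfrac{1}{2} \mathrm{Tr}(|\hat{\rho} - \rho|)$, where $|X| = \sqrt{X^\dagger X}$. -/

import Mathlib

/-
Write P = √ρ̂ and Q = √ρ. Since Tr (P - Q)² = 2 - 2 Tr (P Q), the claim is the Powers–Størmer
inequality Tr (P - Q)² ≤ Tr |P² - Q²|. Let S be the sign of P - Q, so that -1 ≤ S ≤ 1 and
S (P - Q) = (P - Q) S = |P - Q|. As P² - Q² = (P - Q) P + Q (P - Q), cyclicity of the trace gives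
Tr (S (P² - Q²)) = Tr (|P - Q| (P + Q)). This exceeds Tr (P - Q)² by
2 Tr ((P - Q)₊ Q + (P - Q)₋ P), and falls short of Tr |X| (X = P² - Q²) by
Tr ((1 - S) X₊ + (1 + S) X₋); both are traces of products of positive semidefinite matrices.
-/

open Matrix ComplexOrder

/-- `Matrix.PosSemidef.sqrt`, removed from Mathlib, restated with its old definition. -/
noncomputable def Matrix.PosSemidef.sqrt {n 𝕜 : Type*} [Fintype n] [RCLike 𝕜] [DecidableEq n]
    {A : Matrix n n 𝕜} (hA : A.PosSemidef) : Matrix n n 𝕜 :=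
  hA.1.eigenvectorUnitary.1 * diagonal ((↑) ∘ (√·) ∘ hA.1.eigenvalues) *
  (star hA.1.eigenvectorUnitary : Matrix n n 𝕜)

/-- The absolute value `|X| = √(Xᴴ X)` of a complex matrix. -/
noncomputable def matrixAbs {d : ℕ} (X : Matrix (Fin d) (Fin d) ℂ) : Matrix (Fin d) (Fin d) ℂ :=
  (Matrix.posSemidef_conjTranspose_mul_self X).sqrt

open scoped MatrixOrder

namespace Matrix

variable {n 𝕜 : Type*} [Fintype n] [RCLike 𝕜]

theorem PosSemidef.trace_mul_nonneg {A B : Matrix n n 𝕜} (hA : A.PosSemidef)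
    (hB : B.PosSemidef) : 0 ≤ (A * B).trace := by
  classical
  obtain ⟨C, rfl⟩ := CStarAlgebra.nonneg_iff_eq_star_mul_self.mp hA.nonneg
  rw [mul_assoc, trace_mul_comm]
  exact (hB.mul_mul_conjTranspose_same C).trace_nonneg

variable [DecidableEq n]

theorem PosSemidef.sqrt_eq_cfcSqrt {A : Matrix n n 𝕜} (hA : A.PosSemidef) :
    hA.sqrt = CFC.sqrt A := by
  rw [CFC.sqrt_eq_real_sqrt A hA.nonneg, cfcₙ_eq_cfc, hA.1.cfc_eq]
  rfl

theorem IsHermitian.exists_mul_eq_abs {A : Matrix n n 𝕜} (hA : A.IsHermitian) :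
    ∃ S : Matrix n n 𝕜, -1 ≤ S ∧ S ≤ 1 ∧ S * A = CFC.abs A ∧ A * S = CFC.abs A := by
  have hA' : IsSelfAdjoint A := hA
  let sign : ℝ → ℝ := fun x ↦ if 0 ≤ x then 1 else -1
  -- `sign` is discontinuous, but the spectrum of a matrix is finite.
  have hsign : ContinuousOn sign (spectrum ℝ A) := A.finite_real_spectrum.continuousOn _
  have hsign_mul : ∀ x, sign x * x = ‖x‖ := fun x ↦ by
    by_cases hx : 0 ≤ x <;> simp [sign, hx, abs_of_neg, abs_of_nonneg, not_le.mp]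
  refine ⟨cfc sign A, ?_, cfc_le_one _ _ fun x _ ↦ ?_, ?_, ?_⟩
  · simpa using algebraMap_le_cfc sign (-1) A fun x _ ↦ by by_cases hx : 0 ≤ x <;> simp [sign, hx]
  · by_cases hx : 0 ≤ x <;> simp [sign, hx]
  · rw [CFC.abs_eq_cfc_norm A, ← funext hsign_mul, cfc_mul sign (fun x ↦ x) A, cfc_id' ℝ A]
  · simp_rw [CFC.abs_eq_cfc_norm A, ← funext hsign_mul, mul_comm (sign _),
      cfc_mul (fun x ↦ x) sign A, cfc_id' ℝ A]

theorem IsHermitian.trace_mul_le_trace_abs {S X : Matrix n n 𝕜} (hX : X.IsHermitian)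
    (hS₁ : -1 ≤ S) (hS₂ : S ≤ 1) : (S * X).trace ≤ (CFC.abs X).trace := by
  have hX' : IsSelfAdjoint X := hX
  have key : CFC.abs X - S * X = (1 - S) * X⁺ + (S - -1) * X⁻ := by
    rw [← CFC.posPart_add_negPart X]
    nth_rewrite 3 [← CFC.posPart_sub_negPart X]
    noncomm_ring
  rw [← sub_nonneg, ← trace_sub, key, trace_add]
  exact add_nonneg ((le_iff.mp hS₂).trace_mul_nonneg (CFC.posPart_nonneg X).posSemidef)
    ((le_iff.mp hS₁).trace_mul_nonneg (CFC.negPart_nonneg X).posSemidef)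

theorem PosSemidef.trace_sub_sq_le_trace_abs_mul_add {P Q : Matrix n n 𝕜} (hP : P.PosSemidef)
    (hQ : Q.PosSemidef) : ((P - Q) ^ 2).trace ≤ (CFC.abs (P - Q) * (P + Q)).trace := by
  have hΔ : IsSelfAdjoint (P - Q) := hP.1.sub hQ.1
  have key : CFC.abs (P - Q) * (P + Q) - (P - Q) ^ 2 =
      2 • ((P - Q)⁺ * Q) + 2 • ((P - Q)⁻ * P) := by
    have hsub := CFC.posPart_sub_negPart (P - Q)
    rw [← CFC.posPart_add_negPart (P - Q), sq]
    generalize (P - Q)⁺ = Δp, (P - Q)⁻ = Δm at hsub ⊢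
    nth_rewrite 1 [← hsub]
    noncomm_ring
  rw [← sub_nonneg, ← trace_sub, key, trace_add, trace_smul, trace_smul]
  exact add_nonneg
    (nsmul_nonneg ((CFC.posPart_nonneg _).posSemidef.trace_mul_nonneg hQ) 2)
    (nsmul_nonneg ((CFC.negPart_nonneg _).posSemidef.trace_mul_nonneg hP) 2)

theorem PosSemidef.trace_sub_sq_le_trace_abs_sq_sub {P Q : Matrix n n 𝕜} (hP : P.PosSemidef)
    (hQ : Q.PosSemidef) : ((P - Q) ^ 2).trace ≤ (CFC.abs (P ^ 2 - Q ^ 2)).trace := by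
  obtain ⟨S, hS₁, hS₂, hSΔ, hΔS⟩ := (hP.1.sub hQ.1).exists_mul_eq_abs
  have hsq : P ^ 2 - Q ^ 2 = (P - Q) * P + Q * (P - Q) := by noncomm_ring
  calc ((P - Q) ^ 2).trace ≤ (CFC.abs (P - Q) * (P + Q)).trace :=
        hP.trace_sub_sq_le_trace_abs_mul_add hQ
    _ = (S * (P ^ 2 - Q ^ 2)).trace := by
        rw [hsq, mul_add S, trace_add, ← mul_assoc S, hSΔ, ← mul_assoc S, trace_mul_cycle S, hΔS,
          mul_add, trace_add]
    _ ≤ (CFC.abs (P ^ 2 - Q ^ 2)).trace :=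
        ((hP.pow 2).1.sub (hQ.pow 2).1).trace_mul_le_trace_abs hS₁ hS₂

end Matrix

theorem matrixAbs_eq_cfcAbs {d : ℕ} (X : Matrix (Fin d) (Fin d) ℂ) :
    matrixAbs X = CFC.abs X :=
  (posSemidef_conjTranspose_mul_self X).sqrt_eq_cfcSqrt

/-- Audenaert inequality specialization: for density matrices `ρ, ρ̂`,
`1 - Tr(√ρ̂ √ρ) ≤ ½ Tr(|ρ̂ - ρ|)`. -/
theorem audenaert_specialization (d : ℕ) (ρ ρhat : Matrix (Fin d) (Fin d) ℂ)
    (hρ : ρ.PosSemidef) (hρtr : ρ.trace = 1)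
    (hρhat : ρhat.PosSemidef) (hρhattr : ρhat.trace = 1) :
    1 - (hρhat.sqrt * hρ.sqrt).trace ≤ (1 / 2 : ℂ) * (matrixAbs (ρhat - ρ)).trace := by
  rw [hρhat.sqrt_eq_cfcSqrt, hρ.sqrt_eq_cfcSqrt, matrixAbs_eq_cfcAbs]
  have hPQ := (CFC.sqrt_nonneg ρhat).posSemidef.trace_sub_sq_le_trace_abs_sq_sub
    (CFC.sqrt_nonneg ρ).posSemidef
  rw [CFC.sq_sqrt ρhat, CFC.sq_sqrt ρ] at hPQ
  set P := CFC.sqrt ρhat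
  set Q := CFC.sqrt ρ
  have htrace : ((P - Q) ^ 2).trace = 2 - 2 * (P * Q).trace := by
    rw [show (P - Q) ^ 2 = P ^ 2 + Q ^ 2 - P * Q - Q * P by noncomm_ring, trace_sub, trace_sub,
      trace_add, CFC.sq_sqrt ρhat, CFC.sq_sqrt ρ, trace_mul_comm Q, hρtr, hρhattr]
    ring
  calc 1 - (P * Q).trace = (1 / 2 : ℂ) * ((P - Q) ^ 2).trace := by rw [htrace]; ring
    _ ≤ (1 / 2 : ℂ) * (CFC.abs (ρhat - ρ)).trace :=
        mul_le_mul_of_nonneg_left hPQ (div_nonneg zero_le_one zero_le_two)
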